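/- Memory is irrelevant for mv-ATL: Let L be a finite distributive lattice and M an mv-CGS over L. For formulas of mv-ATL (the fragment in which strategic and temporal operators occur only in the combinations ⟪A⟫Xφ, ⟪A⟫φ1Uφ2 and ⟪A⟫φ1Wφ2), the truth value at every state is the same whether the strategic operator ⟪A⟫ is interpreted over collective perfect-recall strategies or over collective memoryless strategies: [[φ]]^{IR}_{M,q} = [[φ]]^{Ir}_{M,q} for every mv-ATL formula φ and every state q. -/

import Mathlib

/-!
Over a finite distributive lattice every element is the join of the join-irreducible, hence
join-prime, elements below it, and for a join-prime `l` the test `l ≤ ·` commutes with every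
operation of the semantics (all joins are finite). So `l ≤ [[φ]]` is the two-valued truth of `φ`
under the valuation `l ≤ V`, and it suffices to treat two-valued ATL.

There, `⟪A⟫X P` holds iff `A` can force `P` in one step, `⟪A⟫P₁ U P₂` iff the state lies in
the least fixed point of `S ↦ P₂ ∪ (P₁ ∩ Force S)`, and `⟪A⟫P₁ W P₂` iff it lies in the
greatest one. A perfect-recall strategy cannot win outside these sets (for `U` the opponents
can keep the play outside the least fixed point; for `W` the states won with memory form a
post-fixed point), and a memoryless strategy wins from inside them: for `W` by staying in the
greatest fixed point, for `U` by descending through the finitely many stages of the least one.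
-/

/-- A concurrent game structure (CGS): availability function `d` (with every
`d a q` nonempty) and a deterministic transition function `t`. -/
structure CGS (Agt St Act : Type*) where
  d : Agt → St → Set Act
  d_nonempty : ∀ a q, (d a q).Nonempty
  t : St → (Agt → Act) → St

namespace CGS

variable {Agt St Act : Type*}

/-- An action profile `α` is available at state `q`. -/
def Avail (G : CGS Agt St Act) (q : St) (α : Agt → Act) : Prop :=
  ∀ a, α a ∈ G.d a q

/-- A perfect-recall strategy for agent `a`: a choice of an available action
for every nonempty finite history, represented as (proper prefix, last state). -/
structure PRStrategy (G : CGS Agt St Act) (a : Agt) where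
  act : List St → St → Act
  avail : ∀ h q, act h q ∈ G.d a q

/-- A memoryless strategy for agent `a`. -/
structure MLStrategy (G : CGS Agt St Act) (a : Agt) where
  act : St → Act
  avail : ∀ q, act q ∈ G.d a q

/-- A collective perfect-recall strategy for the coalition `A`. -/
def PRColl (G : CGS Agt St Act) (A : Set Agt) := (a : A) → PRStrategy G (a : Agt)

/-- A collective memoryless strategy for the coalition `A`. -/
def MLColl (G : CGS Agt St Act) (A : Set Agt) := (a : A) → MLStrategy G (a : Agt)

/-- The outcome set of a collective perfect-recall strategy `s` from state `q`. -/
def prOut (G : CGS Agt St Act) {A : Set Agt} (q : St) (s : PRColl G A) : Set (ℕ → St) :=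
  { lam | lam 0 = q ∧ ∀ i, ∃ α, G.Avail (lam i) α ∧ G.t (lam i) α = lam (i + 1) ∧
      ∀ a : A, α (a : Agt) = (s a).act (List.ofFn fun j : Fin i => lam j) (lam i) }

/-- The outcome set of a collective memoryless strategy `s` from state `q`. -/
def mlOut (G : CGS Agt St Act) {A : Set Agt} (q : St) (s : MLColl G A) : Set (ℕ → St) :=
  { lam | lam 0 = q ∧ ∀ i, ∃ α, G.Avail (lam i) α ∧ G.t (lam i) α = lam (i + 1) ∧
      ∀ a : A, α (a : Agt) = (s a).act (lam i) }

end CGS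

section Lattice

variable {α : Type*} [CompleteLattice α]

theorem SupIrred.supPrime_of_inf_sup_distrib {a : α}
    (hd : ∀ x y z : α, x ⊓ (y ⊔ z) = x ⊓ y ⊔ x ⊓ z) (ha : SupIrred a) : SupPrime a :=
  letI := DistribLattice.ofInfSupLe (α := α) fun x y z => (hd x y z).le
  ha.supPrime

variable [Finite α]

theorem SupPrime.le_iSup {a : α} (ha : SupPrime a) {ι : Sort*} {f : ι → α} :
    a ≤ ⨆ i, f i ↔ ∃ i, a ≤ f i := by
  rw [← sSup_range, ← (Set.toFinite (Set.range f)).coe_toFinset, ← Finset.sup_id_eq_sSup,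
    ha.le_finset_sup]
  simp

theorem le_of_forall_supIrred_le {x y : α} (h : ∀ a, SupIrred a → a ≤ x → a ≤ y) :
    x ≤ y := by
  obtain ⟨s, rfl, hs⟩ := exists_supIrred_decomposition x
  exact Finset.sup_le fun b hb => h b (hs hb) (Finset.le_sup (f := id) hb)

end Lattice

section Fixpoints

variable {α : Type*} [CompleteLattice α] [WellFoundedGT α]

theorem OrderHom.exists_lfp_le_iterate_bot (f : α →o α) : ∃ n, f.lfp ≤ f^[n] ⊥ := by
  obtain ⟨n, hn⟩ := WellFoundedGT.monotone_chain_condition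
    ⟨fun n => f^[n] ⊥, f.monotone.monotone_iterate_of_le_map bot_le⟩
  refine ⟨n, f.lfp_le (le_of_eq ?_)⟩
  rw [← Function.iterate_succ_apply' f n]
  exact (hn (n + 1) n.le_succ).symm

end Fixpoints

section Paths

variable {St : Type*} (P1 P2 : St → Prop)

def PathUntil (lam : ℕ → St) : Prop :=
  ∃ i, P2 (lam i) ∧ ∀ j < i, P1 (lam j)

def PathWeakUntil (lam : ℕ → St) : Prop :=
  (∀ i, P1 (lam i)) ∨ PathUntil P1 P2 lam

variable {P1 P2} {lam : ℕ → St}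

theorem PathUntil.of_tail (h0 : P1 (lam 0)) (h : PathUntil P1 P2 fun n => lam (n + 1)) :
    PathUntil P1 P2 lam := by
  obtain ⟨i, hi, hlt⟩ := h
  refine ⟨i + 1, hi, fun j hj => ?_⟩
  cases j with
  | zero => exact h0
  | succ j => exact hlt j (by omega)

theorem PathWeakUntil.tail (h : PathWeakUntil P1 P2 lam) (h2 : ¬P2 (lam 0)) :
    P1 (lam 0) ∧ PathWeakUntil P1 P2 fun n => lam (n + 1) := by
  rcases h with h | ⟨_ | i, hi, hlt⟩
  · exact ⟨h 0, Or.inl fun i => h (i + 1)⟩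
  · exact absurd hi h2
  · exact ⟨hlt 0 (by omega), Or.inr ⟨i, hi, fun j hj => hlt (j + 1) (by omega)⟩⟩

theorem pathWeakUntil_of_forall
    (h : ∀ i, (∀ k < i, ¬P2 (lam k)) → ¬P2 (lam i) → P1 (lam i)) :
    PathWeakUntil P1 P2 lam := by
  classical
  by_cases hex : ∃ i, P2 (lam i)
  · exact Or.inr ⟨Nat.find hex, Nat.find_spec hex, fun j hj =>
      h j (fun k hk => Nat.find_min hex (hk.trans hj)) (Nat.find_min hex hj)⟩
  · push Not at hex
    exact Or.inl fun i => h i (fun k _ => hex k) (hex i)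

end Paths

namespace CGS

variable {Agt St Act : Type*} (G : CGS Agt St Act) {A : Set Agt}

def Enforces (x : St) (β : A → Act) (S : Set St) : Prop :=
  ∀ α, G.Avail x α → (∀ a : A, α a = β a) → G.t x α ∈ S

variable (A) in
def Forces (x : St) (S : Set St) : Prop :=
  ∃ β : A → Act, (∀ a : A, β a ∈ G.d a x) ∧ G.Enforces x β S

theorem Forces.mono {x : St} {S T : Set St} (h : G.Forces A x S) (hST : S ⊆ T) :
    G.Forces A x T :=
  let ⟨β, hβ, he⟩ := h
  ⟨β, hβ, fun α hα hc => hST (he α hα hc)⟩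

theorem exists_avail_extend (x : St) (β : A → Act) (hβ : ∀ a : A, β a ∈ G.d a x) :
    ∃ α, G.Avail x α ∧ ∀ a : A, α a = β a := by
  classical
  refine ⟨fun b => if hb : b ∈ A then β ⟨b, hb⟩ else (G.d_nonempty b x).choose,
    fun b => ?_, fun a => dif_pos a.2⟩
  by_cases hb : b ∈ A
  · simpa [hb] using hβ ⟨b, hb⟩
  · simpa [hb] using (G.d_nonempty b x).choose_spec

theorem exists_avail_extend_escape (x : St) (β : A → Act) (hβ : ∀ a : A, β a ∈ G.d a x)
    (S : Set St) :
    ∃ α, G.Avail x α ∧ (∀ a : A, α a = β a) ∧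
      (¬G.Enforces x β S → G.t x α ∉ S) := by
  by_cases h : G.Enforces x β S
  · obtain ⟨α, hα, hc⟩ := G.exists_avail_extend x β hβ
    exact ⟨α, hα, hc, absurd h⟩
  · simp only [Enforces, not_forall] at h
    obtain ⟨α, hα, hc, hS⟩ := h
    exact ⟨α, hα, hc, fun _ => hS⟩

def chosenHistory (ch : List St → St → Agt → Act) (q : St) : ℕ → List St × St
  | 0 => ([], q)
  | n + 1 => let p := chosenHistory ch q n; (p.1 ++ [p.2], G.t p.2 (ch p.1 p.2))

theorem exists_mem_prOut_of_chooser (s : PRColl G A) (q : St) (ch : List St → St → Agt → Act)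
    (hch : ∀ h x, G.Avail x (ch h x) ∧ ∀ a : A, ch h x a = (s a).act h x) :
    ∃ lam ∈ G.prOut q s,
      ∀ n, lam (n + 1) = G.t (lam n) (ch (List.ofFn fun j : Fin n => lam j) (lam n)) := by
  set lam : ℕ → St := fun n => (G.chosenHistory ch q n).2
  have hprefix : ∀ n, (G.chosenHistory ch q n).1 = List.ofFn fun j : Fin n => lam j := by
    intro n
    induction n with
    | zero => rfl
    | succ n ih =>
      rw [List.ofFn_succ', List.concat_eq_append]
      exact congrArg (· ++ [lam n]) ih
  refine ⟨lam, ⟨rfl, fun i => ⟨_, (hch _ _).1, rfl, fun a => ?_⟩⟩, fun n => ?_⟩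
  · rw [(hch _ _).2, hprefix]
  · simp only [lam, chosenHistory, hprefix]

theorem prOut_nonempty (s : PRColl G A) (q : St) : (G.prOut q s).Nonempty := by
  choose ch hch using fun h x => G.exists_avail_extend x (fun a : A => (s a).act h x)
    (fun a => (s a).avail h x)
  obtain ⟨lam, hlam, -⟩ := G.exists_mem_prOut_of_chooser s q ch hch
  exact ⟨lam, hlam⟩

def shiftPR (q : St) (s : PRColl G A) : PRColl G A := fun a =>
  { act := fun h x => (s a).act (q :: h) x, avail := fun h x => (s a).avail (q :: h) x }

def consPath (q : St) (lam : ℕ → St) : ℕ → St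
  | 0 => q
  | n + 1 => lam n

theorem consPath_mem_prOut {q : St} {s : PRColl G A} {α : Agt → Act} {lam : ℕ → St}
    (hα : G.Avail q α) (hc : ∀ a : A, α a = (s a).act [] q)
    (hlam : lam ∈ G.prOut (G.t q α) (G.shiftPR q s)) : consPath q lam ∈ G.prOut q s := by
  refine ⟨rfl, fun i => ?_⟩
  cases i with
  | zero => exact ⟨α, hα, hlam.1.symm, hc⟩
  | succ i =>
    obtain ⟨α', hα', ht, hc'⟩ := hlam.2 i
    refine ⟨α', hα', ht, fun a => ?_⟩
    rw [hc' a, List.ofFn_succ]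
    rfl

theorem mlOut_tail {q : St} {m : MLColl G A} {lam : ℕ → St} (h : lam ∈ G.mlOut q m) :
    (fun n => lam (n + 1)) ∈ G.mlOut (lam 1) m :=
  ⟨rfl, fun i => h.2 (i + 1)⟩

theorem mlOut_succ_mem {q : St} {m : MLColl G A} {lam : ℕ → St} (h : lam ∈ G.mlOut q m)
    {i : ℕ} {S : Set St} (hS : G.Enforces (lam i) (fun a => (m a).act (lam i)) S) :
    lam (i + 1) ∈ S := by
  obtain ⟨α, hα, ht, hc⟩ := h.2 i
  exact ht ▸ hS α hα hc

theorem exists_mlColl_enforces (D : Set St) (S : St → Set St)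
    (h : ∀ x ∈ D, G.Forces A x (S x)) :
    ∃ m : MLColl G A, ∀ x ∈ D, G.Enforces x (fun a => (m a).act x) (S x) := by
  classical
  choose β hβ he using h
  refine ⟨fun a => ⟨fun x => if hx : x ∈ D then β x hx a else (G.d_nonempty a x).choose,
    fun x => ?_⟩, fun x hx => ?_⟩
  · by_cases hx : x ∈ D
    · simpa [hx] using hβ x hx a
    · simpa [hx] using (G.d_nonempty a x).choose_spec
  · simpa [hx] using he x hx

def toPR (m : MLColl G A) : PRColl G A := fun a =>
  { act := fun _ x => (m a).act x, avail := fun _ x => (m a).avail x }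

theorem forces_of_prOut {q : St} {s : PRColl G A} {P : St → Prop}
    (hs : ∀ lam ∈ G.prOut q s, P (lam 1)) : G.Forces A q {x | P x} := by
  refine ⟨fun a => (s a).act [] q, fun a => (s a).avail [] q, fun α hα hc => ?_⟩
  obtain ⟨lam, hlam⟩ := G.prOut_nonempty (G.shiftPR q s) (G.t q α)
  simpa [consPath, hlam.1] using hs _ (G.consPath_mem_prOut hα hc hlam)

theorem exists_prColl_iff_exists_mlColl_next (q : St) (P : St → Prop) :
    (∃ s : PRColl G A, ∀ lam ∈ G.prOut q s, P (lam 1)) ↔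
      ∃ m : MLColl G A, ∀ lam ∈ G.mlOut q m, P (lam 1) := by
  refine ⟨fun ⟨s, hs⟩ => ?_, fun ⟨m, hm⟩ => ⟨G.toPR m, hm⟩⟩
  obtain ⟨m, hm⟩ := G.exists_mlColl_enforces {q} (fun _ => {x | P x})
    fun x hx => hx ▸ G.forces_of_prOut hs
  exact ⟨m, fun lam hlam => G.mlOut_succ_mem hlam (i := 0) (hlam.1 ▸ hm q rfl)⟩

variable (A) in
def untilOp (P1 P2 : St → Prop) : Set St →o Set St where
  toFun S := {x | P2 x ∨ P1 x ∧ G.Forces A x S}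
  monotone' _ _ hST _ := Or.imp_right (And.imp_right fun h => h.mono G hST)

variable (P1 P2 : St → Prop)

theorem mem_lfp_untilOp_of_prOut {q : St} {s : PRColl G A}
    (hs : ∀ lam ∈ G.prOut q s, PathUntil P1 P2 lam) : q ∈ (G.untilOp A P1 P2).lfp := by
  set W := (G.untilOp A P1 P2).lfp
  have hW : G.untilOp A P1 P2 W = W := (G.untilOp A P1 P2).map_lfp
  by_contra hq
  choose ch hch hc hesc using fun h x => G.exists_avail_extend_escape x
    (fun a : A => (s a).act h x) (fun a => (s a).avail h x) W
  obtain ⟨lam, hlam, hnext⟩ :=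
    G.exists_mem_prOut_of_chooser s q ch fun h x => ⟨hch h x, hc h x⟩
  have hout : ∀ i, (∀ j < i, P1 (lam j)) → lam i ∉ W := by
    intro i
    induction i with
    | zero => exact fun _ => hlam.1 ▸ hq
    | succ i ih =>
      intro h1
      have hi : lam i ∉ G.untilOp A P1 P2 W :=
        fun h => ih (fun j hj => h1 j (by omega)) (hW.le h)
      rw [hnext]
      exact hesc _ _ fun he => hi (Or.inr ⟨h1 i (by omega), _, fun a => (s a).avail _ _, he⟩)
  obtain ⟨i, h2, h1⟩ := hs lam hlam
  exact hout i h1 (hW.le (Or.inl h2))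

theorem exists_mlColl_until : ∃ m : MLColl G A, ∀ k, ∀ q ∈ (G.untilOp A P1 P2)^[k] ∅,
    ∀ lam ∈ G.mlOut q m, PathUntil P1 P2 lam := by
  set f := G.untilOp A P1 P2
  let rank (x : St) : ℕ := sInf {k | x ∈ f^[k + 1] ∅}
  have hrank {x : St} {k : ℕ} (hx : x ∈ f^[k + 1] ∅) :
      x ∈ f (f^[rank x] ∅) ∧ rank x ≤ k := by
    refine ⟨?_, Nat.sInf_le hx⟩
    rw [← Function.iterate_succ_apply' f]
    exact Nat.sInf_mem (s := {k | x ∈ f^[k + 1] ∅}) ⟨k, hx⟩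
  obtain ⟨m, hm⟩ := G.exists_mlColl_enforces {x | ¬P2 x ∧ ∃ k, x ∈ f^[k + 1] ∅}
    (fun x => f^[rank x] ∅) fun x ⟨h2, k, hx⟩ => ((hrank hx).1.resolve_left h2).2
  refine ⟨m, fun k => ?_⟩
  induction k with
  | zero => exact fun q hq => hq.elim
  | succ k ih =>
    intro q hq lam hlam
    obtain rfl := hlam.1
    by_cases h2 : P2 (lam 0)
    · exact ⟨0, h2, by omega⟩
    have hnext : lam 1 ∈ f^[k] ∅ := f.monotone.monotone_iterate_of_le_map bot_le (hrank hq).2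
      (G.mlOut_succ_mem hlam (hm _ ⟨h2, k, hq⟩))
    rw [Function.iterate_succ_apply'] at hq
    exact (ih _ hnext _ (G.mlOut_tail hlam)).of_tail (hq.resolve_left h2).1

theorem exists_prColl_iff_exists_mlColl_until [Finite St] (q : St) :
    (∃ s : PRColl G A, ∀ lam ∈ G.prOut q s, PathUntil P1 P2 lam) ↔
      ∃ m : MLColl G A, ∀ lam ∈ G.mlOut q m, PathUntil P1 P2 lam := by
  refine ⟨fun ⟨s, hs⟩ => ?_, fun ⟨m, hm⟩ => ⟨G.toPR m, hm⟩⟩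
  obtain ⟨n, hn⟩ := (G.untilOp A P1 P2).exists_lfp_le_iterate_bot
  obtain ⟨m, hm⟩ := G.exists_mlColl_until P1 P2
  exact ⟨m, hm n q (hn (G.mem_lfp_untilOp_of_prOut P1 P2 hs))⟩

theorem mem_gfp_untilOp_of_prOut {q : St} {s : PRColl G A}
    (hs : ∀ lam ∈ G.prOut q s, PathWeakUntil P1 P2 lam) : q ∈ (G.untilOp A P1 P2).gfp := by
  let E := {x | ∃ s : PRColl G A, ∀ lam ∈ G.prOut x s, PathWeakUntil P1 P2 lam}
  suffices hE : E ⊆ G.untilOp A P1 P2 E from (G.untilOp A P1 P2).le_gfp hE ⟨s, hs⟩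
  rintro x ⟨s, hs⟩
  by_cases h2 : P2 x
  · exact Or.inl h2
  obtain ⟨lam₀, hlam₀⟩ := G.prOut_nonempty s x
  have h1 : P1 x := hlam₀.1 ▸ ((hs lam₀ hlam₀).tail (hlam₀.1 ▸ h2)).1
  refine Or.inr ⟨h1, fun a => (s a).act [] x, fun a => (s a).avail [] x, fun α hα hc => ?_⟩
  exact ⟨G.shiftPR x s, fun lam hlam => ((hs _ (G.consPath_mem_prOut hα hc hlam)).tail h2).2⟩

theorem exists_mlColl_weakUntil : ∃ m : MLColl G A, ∀ q ∈ (G.untilOp A P1 P2).gfp,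
    ∀ lam ∈ G.mlOut q m, PathWeakUntil P1 P2 lam := by
  set f := G.untilOp A P1 P2
  obtain ⟨m, hm⟩ := G.exists_mlColl_enforces {x | x ∈ f.gfp ∧ ¬P2 x} (fun _ => f.gfp)
    fun x ⟨hx, h2⟩ => (f.map_gfp.ge hx |>.resolve_left h2).2
  refine ⟨m, fun q hq lam hlam => pathWeakUntil_of_forall fun i => ?_⟩
  have hin : ∀ i, (∀ k < i, ¬P2 (lam k)) → lam i ∈ f.gfp := by
    intro i
    induction i with
    | zero => exact fun _ => hlam.1 ▸ hq
    | succ i ih =>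
      intro h2
      have hi := ih fun k hk => h2 k (by omega)
      exact G.mlOut_succ_mem hlam (hm _ ⟨hi, h2 i (by omega)⟩)
  exact fun h2 h2i => (f.map_gfp.ge (hin i h2) |>.resolve_left h2i).1

theorem exists_prColl_iff_exists_mlColl_weakUntil (q : St) :
    (∃ s : PRColl G A, ∀ lam ∈ G.prOut q s, PathWeakUntil P1 P2 lam) ↔
      ∃ m : MLColl G A, ∀ lam ∈ G.mlOut q m, PathWeakUntil P1 P2 lam := by
  refine ⟨fun ⟨s, hs⟩ => ?_, fun ⟨m, hm⟩ => ⟨G.toPR m, hm⟩⟩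
  obtain ⟨m, hm⟩ := G.exists_mlColl_weakUntil P1 P2
  exact ⟨m, hm q (G.mem_gfp_untilOp_of_prOut P1 P2 hs)⟩

end CGS

/-- Formulas of mv-ATL ("vanilla" ATL): strategic and temporal operators occur
only in the combinations `⟪A⟫X`, `⟪A⟫U` and `⟪A⟫W`. -/
inductive ATLForm (AP C Agt : Type) : Type
  | const : C → ATLForm AP C Agt
  | atom  : AP → ATLForm AP C Agt
  | and   : ATLForm AP C Agt → ATLForm AP C Agt → ATLForm AP C Agt
  | or    : ATLForm AP C Agt → ATLForm AP C Agt → ATLForm AP C Agt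
  | coopX : Set Agt → ATLForm AP C Agt → ATLForm AP C Agt
  | coopU : Set Agt → ATLForm AP C Agt → ATLForm AP C Agt → ATLForm AP C Agt
  | coopW : Set Agt → ATLForm AP C Agt → ATLForm AP C Agt → ATLForm AP C Agt

variable {Agt St Act AP C : Type} {L : Type*} [CompleteLattice L]

/-- Multi-valued semantics of mv-ATL under perfect-recall (IR) strategies. -/
noncomputable def valIR (G : CGS Agt St Act) (σ : C → L) (V : AP → St → L) :
    ATLForm AP C Agt → St → L
  | .const c, _ => σ c
  | .atom p, q => V p q
  | .and φ ψ, q => valIR G σ V φ q ⊓ valIR G σ V ψ q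
  | .or φ ψ, q => valIR G σ V φ q ⊔ valIR G σ V ψ q
  | .coopX A φ, q => ⨆ s : CGS.PRColl G A, ⨅ lam ∈ CGS.prOut G q s, valIR G σ V φ (lam 1)
  | .coopU A φ ψ, q => ⨆ s : CGS.PRColl G A, ⨅ lam ∈ CGS.prOut G q s,
      ⨆ i : ℕ, (valIR G σ V ψ (lam i) ⊓ ⨅ j : Fin i, valIR G σ V φ (lam (j : ℕ)))
  | .coopW A φ ψ, q => ⨆ s : CGS.PRColl G A, ⨅ lam ∈ CGS.prOut G q s,
      ((⨅ i : ℕ, valIR G σ V φ (lam i)) ⊔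
        ⨆ i : ℕ, (valIR G σ V ψ (lam i) ⊓ ⨅ j : Fin i, valIR G σ V φ (lam (j : ℕ))))

/-- Multi-valued semantics of mv-ATL under memoryless (Ir) strategies. -/
noncomputable def valIr (G : CGS Agt St Act) (σ : C → L) (V : AP → St → L) :
    ATLForm AP C Agt → St → L
  | .const c, _ => σ c
  | .atom p, q => V p q
  | .and φ ψ, q => valIr G σ V φ q ⊓ valIr G σ V ψ q
  | .or φ ψ, q => valIr G σ V φ q ⊔ valIr G σ V ψ q
  | .coopX A φ, q => ⨆ s : CGS.MLColl G A, ⨅ lam ∈ CGS.mlOut G q s, valIr G σ V φ (lam 1)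
  | .coopU A φ ψ, q => ⨆ s : CGS.MLColl G A, ⨅ lam ∈ CGS.mlOut G q s,
      ⨆ i : ℕ, (valIr G σ V ψ (lam i) ⊓ ⨅ j : Fin i, valIr G σ V φ (lam (j : ℕ)))
  | .coopW A φ ψ, q => ⨆ s : CGS.MLColl G A, ⨅ lam ∈ CGS.mlOut G q s,
      ((⨅ i : ℕ, valIr G σ V φ (lam i)) ⊔
        ⨆ i : ℕ, (valIr G σ V ψ (lam i) ⊓ ⨅ j : Fin i, valIr G σ V φ (lam (j : ℕ))))

theorem valIR_iff_valIr_prop [Finite St] (G : CGS Agt St Act) (σ : C → Prop)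
    (V : AP → St → Prop) (φ : ATLForm AP C Agt) (q : St) :
    valIR G σ V φ q ↔ valIr G σ V φ q := by
  induction φ generalizing q with
  | const c => rfl
  | atom p => rfl
  | and φ ψ ih1 ih2 => exact and_congr (ih1 q) (ih2 q)
  | or φ ψ ih1 ih2 => exact or_congr (ih1 q) (ih2 q)
  | coopX A φ ih =>
    simp only [valIR, valIr, iSup_Prop_eq, iInf_Prop_eq, ih]
    exact G.exists_prColl_iff_exists_mlColl_next q _
  | coopU A φ ψ ih1 ih2 =>
    simp only [valIR, valIr, iSup_Prop_eq, iInf_Prop_eq, inf_Prop_eq, ih1, ih2, Fin.forall_iff]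
    exact G.exists_prColl_iff_exists_mlColl_until _ _ q
  | coopW A φ ψ ih1 ih2 =>
    simp only [valIR, valIr, iSup_Prop_eq, iInf_Prop_eq, inf_Prop_eq, sup_Prop_eq, ih1, ih2,
      Fin.forall_iff]
    exact G.exists_prColl_iff_exists_mlColl_weakUntil _ _ q

section PrimeTruncation

variable [Finite L] {l : L} (G : CGS Agt St Act) (σ : C → L) (V : AP → St → L)

theorem le_valIR_iff (hl : SupPrime l) (φ : ATLForm AP C Agt) (q : St) :
    l ≤ valIR G σ V φ q ↔ valIR G (fun c => l ≤ σ c) (fun p x => l ≤ V p x) φ q := by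
  induction φ generalizing q with
  | const c => rfl
  | atom p => rfl
  | and φ ψ ih1 ih2 => exact le_inf_iff.trans (and_congr (ih1 q) (ih2 q))
  | or φ ψ ih1 ih2 => exact hl.le_sup.trans (or_congr (ih1 q) (ih2 q))
  | coopX A φ ih => simp only [valIR, hl.le_iSup, le_iInf_iff, ih, iSup_Prop_eq, iInf_Prop_eq]
  | coopU A φ ψ ih1 ih2 =>
    simp only [valIR, hl.le_iSup, le_iInf_iff, le_inf_iff, ih1, ih2, iSup_Prop_eq, iInf_Prop_eq,
      inf_Prop_eq]
  | coopW A φ ψ ih1 ih2 =>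
    simp only [valIR, hl.le_iSup, le_iInf_iff, le_inf_iff, hl.le_sup, ih1, ih2, iSup_Prop_eq,
      iInf_Prop_eq, inf_Prop_eq, sup_Prop_eq]

theorem le_valIr_iff (hl : SupPrime l) (φ : ATLForm AP C Agt) (q : St) :
    l ≤ valIr G σ V φ q ↔ valIr G (fun c => l ≤ σ c) (fun p x => l ≤ V p x) φ q := by
  induction φ generalizing q with
  | const c => rfl
  | atom p => rfl
  | and φ ψ ih1 ih2 => exact le_inf_iff.trans (and_congr (ih1 q) (ih2 q))
  | or φ ψ ih1 ih2 => exact hl.le_sup.trans (or_congr (ih1 q) (ih2 q))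
  | coopX A φ ih => simp only [valIr, hl.le_iSup, le_iInf_iff, ih, iSup_Prop_eq, iInf_Prop_eq]
  | coopU A φ ψ ih1 ih2 =>
    simp only [valIr, hl.le_iSup, le_iInf_iff, le_inf_iff, ih1, ih2, iSup_Prop_eq, iInf_Prop_eq,
      inf_Prop_eq]
  | coopW A φ ψ ih1 ih2 =>
    simp only [valIr, hl.le_iSup, le_iInf_iff, le_inf_iff, hl.le_sup, ih1, ih2, iSup_Prop_eq,
      iInf_Prop_eq, inf_Prop_eq, sup_Prop_eq]

end PrimeTruncation

theorem stmt_19_general {L : Type*} [CompleteLattice L] [Fintype L]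
    (hdistrib : ∀ x y z : L, x ⊓ (y ⊔ z) = (x ⊓ y) ⊔ (x ⊓ z))
    {Agt St Act AP C : Type} [Fintype St]
    (G : CGS Agt St Act) (σ : C → L) (V : AP → St → L)
    (φ : ATLForm AP C Agt) (q : St) :
    valIR G σ V φ q = valIr G σ V φ q := by
  have hle : ∀ l : L, SupIrred l → (l ≤ valIR G σ V φ q ↔ l ≤ valIr G σ V φ q) := by
    intro l hl
    have hprime := hl.supPrime_of_inf_sup_distrib hdistrib
    rw [le_valIR_iff G σ V hprime, le_valIr_iff G σ V hprime]
    exact valIR_iff_valIr_prop G _ _ φ q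
  exact le_antisymm (le_of_forall_supIrred_le fun l hl => (hle l hl).1)
    (le_of_forall_supIrred_le fun l hl => (hle l hl).2)

/-- Memory is irrelevant for mv-ATL over a finite distributive lattice: the
perfect-recall and memoryless semantics assign the same truth value to every
mv-ATL formula at every state. -/
theorem stmt_19 {L : Type*} [CompleteLattice L] [Fintype L]
    (hdistrib : ∀ x y z : L, x ⊓ (y ⊔ z) = (x ⊓ y) ⊔ (x ⊓ z))
    {Agt St Act AP C : Type} [Fintype Agt] [Fintype St] [Fintype Act]
    [Nonempty Agt] [Nonempty St] [Nonempty Act]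
    (G : CGS Agt St Act) (σ : C → L) (V : AP → St → L)
    (φ : ATLForm AP C Agt) (q : St) :
    valIR G σ V φ q = valIr G σ V φ q :=
  stmt_19_general hdistrib G σ V φ q
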